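/- Let d₁ = d₂ = 1, g > 0, α = p/q with p ∈ ℤ, q ≥ 1, and ω ∈ [0,1) with (p/q)x₂ + ω ∉ 1/2 + ℤ for all x₂ ∈ ℤ, so that V(x) = δ(x₁) g tan π((p/q)x₂ + ω) is a bounded real potential and H = H₀ + V is a bounded self-adjoint operator on ℓ²(ℤ²;ℂ). Suppose E ∈ ℝ and there exists a function Ψ : ℤ² → ℂ, not identically zero, such that: (a) there is θ ∈ ℝ with Ψ(x₁, x₂ + q) = e^{iθ} Ψ(x₁,x₂) for all (x₁,x₂) ∈ ℤ² (Bloch–Floquet periodicity in the longitudinal direction); (b) ∑_{x₁∈ℤ} max_{0 ≤ x₂ < q} |Ψ(x₁,x₂)|² < ∞; and (c) −(1/2)∑_{|y−x|=1} Ψ(y) + V(x) Ψ(x) = E Ψ(x) pointwise for all x ∈ ℤ². Then E (viewed in ℂ) belongs to the spectrum of H. -/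

import Mathlib

open Complex

/-- The two-dimensional discrete Laplacian part: `(H₀Ψ)(x) = -(1/2) ∑_{|x-y|=1} Ψ(y)`. -/
noncomputable def lap2 (Ψ : ℤ × ℤ → ℂ) (x : ℤ × ℤ) : ℂ :=
  -(1/2) * (Ψ (x.1 + 1, x.2) + Ψ (x.1 - 1, x.2) + Ψ (x.1, x.2 + 1) + Ψ (x.1, x.2 - 1))

/-- The periodic surface Maryland potential `V(x) = δ(x₁) g tan π((p/q)x₂ + ω)`. -/
noncomputable def Vper (g : ℝ) (p : ℤ) (q : ℕ) (ω : ℝ) (x : ℤ × ℤ) : ℝ :=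
  if x.1 = 0 then g * Real.tan (Real.pi * ((p : ℝ) / (q : ℝ) * (x.2 : ℝ) + ω)) else 0

/-! If `E ∉ σ(H)`, then `E - H` has a bounded inverse, so `‖Φ‖ ≤ C ‖(E - H)Φ‖` on `ℓ²`.
Cutting `Ψ` off to the strip of rows `b ≤ x₂ ≤ b + kq` gives `Φₖ ∈ ℓ²` with `‖Φₖ‖² ≥ (k + 1)|Ψ(x₀)|²`,
since `|Ψ|` is `q`-periodic in `x₂`. Yet `Ψ` solves the eigenvalue equation and the potential and the
horizontal hops commute with the cutoff, so `(E - H)Φₖ` lives on the four rows at the edges of the strip,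
where it is controlled by the row maxima of `|Ψ|²`: it stays bounded while `‖Φₖ‖ → ∞`. -/

theorem mem_spectrum_of_forall_exists_norm_gt {𝕜 X : Type*} [NontriviallyNormedField 𝕜]
    [NormedAddCommGroup X] [NormedSpace 𝕜 X] (T : X →L[𝕜] X) (a : 𝕜) (M : ℝ)
    (h : ∀ C : ℝ, ∃ x, ‖(algebraMap 𝕜 (X →L[𝕜] X) a - T) x‖ ≤ M ∧ C < ‖x‖) :
    a ∈ spectrum 𝕜 T := by
  rintro ⟨u, hu⟩
  obtain ⟨x, hxM, hCx⟩ := h (‖(↑u⁻¹ : X →L[𝕜] X)‖ * M)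
  have hx : (↑u⁻¹ : X →L[𝕜] X) ((u : X →L[𝕜] X) x) = x := by
    rw [← mul_apply_eq_comp, Units.inv_mul, one_apply_eq_self]
  have hxle : ‖x‖ ≤ ‖(↑u⁻¹ : X →L[𝕜] X)‖ * M := calc
    ‖x‖ = ‖(↑u⁻¹ : X →L[𝕜] X) ((u : X →L[𝕜] X) x)‖ := by rw [hx]
    _ ≤ ‖(↑u⁻¹ : X →L[𝕜] X)‖ * ‖(u : X →L[𝕜] X) x‖ := ContinuousLinearMap.le_opNorm _ _
    _ ≤ ‖(↑u⁻¹ : X →L[𝕜] X)‖ * M := by rw [hu]; gcongr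
  linarith

theorem summable_and_tsum_le_card_mul_of_le_fst {α β : Type*} {S : α → ℝ} {f : α × β → ℝ}
    (hS : Summable S) (hS0 : 0 ≤ S) (F : Finset β) (hf0 : 0 ≤ f) (hfS : ∀ x, f x ≤ S x.1)
    (hfF : ∀ x, x.2 ∉ F → f x = 0) :
    Summable f ∧ ∑' x, f x ≤ F.card * ∑' a, S a := by
  classical
  set χ : β → ℝ := fun b => if b ∈ F then 1 else 0
  have hχ : Summable χ := summable_of_ne_finset_zero fun b hb => if_neg hb
  have hχ0 : 0 ≤ χ := fun b => by dsimp only [χ]; split_ifs <;> norm_num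
  have hg := hS.mul_of_nonneg hχ hS0 hχ0
  have hfg : ∀ x, f x ≤ S x.1 * χ x.2 := fun x => by
    by_cases hx : x.2 ∈ F
    · simpa [χ, hx] using hfS x
    · simp [χ, hx, hfF x hx]
  have hf := hg.of_nonneg_of_le hf0 hfg
  refine ⟨hf, ?_⟩
  calc ∑' x, f x ≤ ∑' x, S x.1 * χ x.2 := hf.tsum_le_tsum hfg hg
    _ = (∑' a, S a) * ∑' b, χ b := (hS.tsum_mul_tsum hχ hg).symm
    _ = F.card * ∑' a, S a := by
      rw [tsum_eq_sum (s := F) fun b hb => if_neg hb, Finset.sum_boole, mul_comm]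
      simp

theorem Function.Periodic.le_ciSup_fin {f : ℤ → ℝ} {q : ℕ} (hf : Function.Periodic f q)
    (hq : 0 < q) (m : ℤ) : f m ≤ ⨆ j : Fin q, f ((j : ℕ) : ℤ) := by
  obtain ⟨y, ⟨hy0, hyq⟩, hfy⟩ := hf.exists_mem_Ico₀ (by exact_mod_cast hq) m
  lift y to ℕ using hy0
  rw [hfy]
  exact le_ciSup (f := fun j : Fin q => f ((j : ℕ) : ℤ)) (Set.finite_range _).bddAbove ⟨y, by omega⟩

theorem periodic_norm_of_bloch {Ψ : ℤ × ℤ → ℂ} {c : ℂ} (hc : ‖c‖ = 1) {q : ℤ}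
    (h : ∀ x : ℤ × ℤ, Ψ (x.1, x.2 + q) = c * Ψ x) (x₁ : ℤ) :
    Function.Periodic (fun x₂ => ‖Ψ (x₁, x₂)‖) q := fun x₂ => by
  simp [h (x₁, x₂), hc]

theorem memℓp_two_iff {ι : Type*} {E : ι → Type*} [∀ i, NormedAddCommGroup (E i)]
    {f : ∀ i, E i} : Memℓp f 2 ↔ Summable fun i => ‖f i‖ ^ 2 := by
  rw [memℓp_gen_iff (by norm_num)]
  norm_num

theorem lp.norm_sq_eq_tsum {ι : Type*} {E : ι → Type*} [∀ i, NormedAddCommGroup (E i)]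
    (f : lp E 2) : ‖f‖ ^ 2 = ∑' i, ‖f i‖ ^ 2 := by
  simpa using lp.norm_rpow_eq_tsum (E := E) (p := 2) (by norm_num) f

theorem lp.algebraMap_sub_apply {ι : Type*}
    (H : lp (fun _ : ι => ℂ) 2 →L[ℂ] lp (fun _ : ι => ℂ) 2) (a : ℂ) (Φ : lp (fun _ : ι => ℂ) 2)
    (i : ι) : ((algebraMap ℂ _ a - H) Φ : ι → ℂ) i = a * Φ i - (H Φ : ι → ℂ) i := by
  simp only [Algebra.algebraMap_eq_smul_one, sub_apply, smul_apply, one_apply_eq_self]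
  rfl

theorem norm_sq_half_mul_add_le {u v a b : ℂ} (hu : ‖u‖ ≤ 1) (hv : ‖v‖ ≤ 1) :
    ‖(1 / 2) * (u * a + v * b)‖ ^ 2 ≤ (‖a‖ ^ 2 + ‖b‖ ^ 2) / 2 := by
  have h : ‖(1 / 2) * (u * a + v * b)‖ ≤ (‖a‖ + ‖b‖) / 2 := calc
    _ ≤ (1 / 2) * (‖u * a‖ + ‖v * b‖) := by
      rw [norm_mul, norm_div, norm_one, Complex.norm_two]; gcongr; exact norm_add_le _ _
    _ = (1 / 2) * (‖u‖ * ‖a‖ + ‖v‖ * ‖b‖) := by rw [norm_mul, norm_mul]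
    _ ≤ (1 / 2) * (1 * ‖a‖ + 1 * ‖b‖) := by gcongr
    _ = (‖a‖ + ‖b‖) / 2 := by ring
  nlinarith [norm_nonneg ((1 / 2) * (u * a + v * b)), sq_nonneg (‖a‖ - ‖b‖)]

theorem lap2_residual_mul_of_eigen {Ψ : ℤ × ℤ → ℂ} {V : ℤ × ℤ → ℂ} {E : ℂ}
    (hΨ : ∀ x, lap2 Ψ x + V x * Ψ x = E * Ψ x) (χ : ℤ → ℂ) (x : ℤ × ℤ) :
    E * (χ x.2 * Ψ x) - (lap2 (fun y => χ y.2 * Ψ y) x + V x * (χ x.2 * Ψ x)) =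
      (1 / 2) * ((χ (x.2 + 1) - χ x.2) * Ψ (x.1, x.2 + 1)
        + (χ (x.2 - 1) - χ x.2) * Ψ (x.1, x.2 - 1)) := by
  have h := hΨ x
  simp only [lap2] at h ⊢
  linear_combination (-χ x.2) * h

noncomputable def rowCutoff (b c m : ℤ) : ℂ := if m ∈ Finset.Icc b c then 1 else 0

theorem norm_rowCutoff_sub_le (b c m n : ℤ) : ‖rowCutoff b c m - rowCutoff b c n‖ ≤ 1 := by
  unfold rowCutoff; split_ifs <;> simp

theorem norm_rowCutoff_mul_le (b c m : ℤ) (z : ℂ) : ‖rowCutoff b c m * z‖ ≤ ‖z‖ := by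
  unfold rowCutoff; split_ifs <;> simp

theorem rowCutoff_add_one_eq_and_sub_one_eq {b c m : ℤ}
    (hm : m ∉ ({b - 1, b, c, c + 1} : Finset ℤ)) :
    rowCutoff b c (m + 1) = rowCutoff b c m ∧ rowCutoff b c (m - 1) = rowCutoff b c m := by
  simp only [Finset.mem_insert, Finset.mem_singleton, not_or] at hm
  unfold rowCutoff
  constructor <;> congr 1 <;> simp only [Finset.mem_Icc, eq_iff_iff] <;> omega

section Truncation

variable {Ψ : ℤ × ℤ → ℂ} {S : ℤ → ℝ}

theorem memℓp_rowCutoff_mul (hS : Summable S) (hΨS : ∀ x, ‖Ψ x‖ ^ 2 ≤ S x.1) (b c : ℤ) :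
    Memℓp (fun x => rowCutoff b c x.2 * Ψ x) 2 := by
  have hS0 : 0 ≤ S := fun a => (sq_nonneg _).trans (hΨS (a, 0))
  refine memℓp_two_iff.mpr
    (summable_and_tsum_le_card_mul_of_le_fst hS hS0 (Finset.Icc b c) (fun x => by positivity)
      (fun x => ?_) (fun x hx => ?_)).1
  · exact (pow_le_pow_left₀ (norm_nonneg _) (norm_rowCutoff_mul_le _ _ _ _) 2).trans (hΨS x)
  · simp [rowCutoff, hx]

theorem tsum_norm_sq_residual_rowCutoff_mul_le {V : ℤ × ℤ → ℂ} {E : ℂ} (hS : Summable S)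
    (hΨS : ∀ x, ‖Ψ x‖ ^ 2 ≤ S x.1) (hΨ : ∀ x, lap2 Ψ x + V x * Ψ x = E * Ψ x) (b c : ℤ) :
    ∑' x, ‖E * (rowCutoff b c x.2 * Ψ x)
        - (lap2 (fun y => rowCutoff b c y.2 * Ψ y) x + V x * (rowCutoff b c x.2 * Ψ x))‖ ^ 2
      ≤ 4 * ∑' a, S a := by
  have hS0 : 0 ≤ S := fun a => (sq_nonneg _).trans (hΨS (a, 0))
  simp_rw [lap2_residual_mul_of_eigen hΨ]
  refine (summable_and_tsum_le_card_mul_of_le_fst hS hS0 {b - 1, b, c, c + 1}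
    (fun x => by positivity) (fun x => ?_) (fun x hx => ?_)).2.trans ?_
  · refine (norm_sq_half_mul_add_le (norm_rowCutoff_sub_le _ _ _ _)
      (norm_rowCutoff_sub_le _ _ _ _)).trans ?_
    linarith [hΨS (x.1, x.2 + 1), hΨS (x.1, x.2 - 1)]
  · obtain ⟨hadd, hsub⟩ := rowCutoff_add_one_eq_and_sub_one_eq hx
    simp [hadd, hsub]
  · gcongr
    · exact tsum_nonneg hS0
    · exact_mod_cast Finset.card_le_four

theorem le_tsum_norm_sq_rowCutoff_mul {q : ℤ} (hq : 0 < q)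
    (hper : ∀ x₁, Function.Periodic (fun x₂ => ‖Ψ (x₁, x₂)‖) q) (x₀ : ℤ × ℤ) (k : ℕ)
    (hsum : Summable fun x => ‖rowCutoff x₀.2 (x₀.2 + k * q) x.2 * Ψ x‖ ^ 2) :
    (k + 1) * ‖Ψ x₀‖ ^ 2 ≤ ∑' x, ‖rowCutoff x₀.2 (x₀.2 + k * q) x.2 * Ψ x‖ ^ 2 := by
  set orbit : ℕ → ℤ × ℤ := fun j => (x₀.1, x₀.2 + j * q)
  have horbit : Function.Injective orbit := fun i j hij => by
    simpa [orbit, hq.ne'] using congrArg Prod.snd hij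
  have hterm : ∀ j ∈ Finset.range (k + 1),
      ‖rowCutoff x₀.2 (x₀.2 + k * q) (orbit j).2 * Ψ (orbit j)‖ ^ 2 = ‖Ψ x₀‖ ^ 2 := by
    intro j hj
    have hjk : (j : ℤ) ≤ k := by simp only [Finset.mem_range] at hj; omega
    have hmem : (orbit j).2 ∈ Finset.Icc x₀.2 (x₀.2 + k * q) := by
      simp only [orbit, Finset.mem_Icc]; constructor <;> nlinarith
    rw [rowCutoff, if_pos hmem, one_mul]
    exact congrArg (· ^ 2) ((hper x₀.1).nat_mul j x₀.2)
  calc (k + 1) * ‖Ψ x₀‖ ^ 2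
      = ∑ x ∈ (Finset.range (k + 1)).image orbit,
          ‖rowCutoff x₀.2 (x₀.2 + k * q) x.2 * Ψ x‖ ^ 2 := by
        rw [Finset.sum_image horbit.injOn, Finset.sum_congr rfl hterm]; simp
    _ ≤ _ := hsum.sum_le_tsum _ fun _ _ => by positivity

end Truncation

theorem bloch_generalized_eigenfunction_energy_in_spectrum_general
    (g : ℝ) (p : ℤ) (q : ℕ) (hq : 1 ≤ q)
    (ω : ℝ)
    (H : lp (fun _ : ℤ × ℤ => ℂ) 2 →L[ℂ] lp (fun _ : ℤ × ℤ => ℂ) 2)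
    (hact : ∀ (Φ : lp (fun _ : ℤ × ℤ => ℂ) 2) (x : ℤ × ℤ),
      (H Φ : ∀ _ : ℤ × ℤ, ℂ) x = lap2 (↑Φ) x + (Vper g p q ω x : ℂ) * Φ x)
    (E : ℝ) (Ψ : ℤ × ℤ → ℂ) (hΨ : Ψ ≠ 0)
    (θ : ℝ)
    (hbloch : ∀ x : ℤ × ℤ, Ψ (x.1, x.2 + (q : ℤ)) = Complex.exp ((θ : ℂ) * Complex.I) * Ψ x)
    (hsq : Summable fun x₁ : ℤ => ⨆ m : Fin q, ‖Ψ (x₁, ((m : ℕ) : ℤ))‖ ^ 2)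
    (heq : ∀ x : ℤ × ℤ, lap2 Ψ x + (Vper g p q ω x : ℂ) * Ψ x = (E : ℂ) * Ψ x) :
    (E : ℂ) ∈ spectrum ℂ H := by
  obtain ⟨x₀, hx₀⟩ := Function.ne_iff.mp hΨ
  have hper := periodic_norm_of_bloch (norm_exp_ofReal_mul_I θ) hbloch
  set S : ℤ → ℝ := fun x₁ => ⨆ m : Fin q, ‖Ψ (x₁, ((m : ℕ) : ℤ))‖ ^ 2
  have hΨS (x : ℤ × ℤ) : ‖Ψ x‖ ^ 2 ≤ S x.1 := ((hper x.1).comp (· ^ 2)).le_ciSup_fin hq x.2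
  refine mem_spectrum_of_forall_exists_norm_gt H E √(4 * ∑' a, S a) fun C => ?_
  obtain ⟨k, hk⟩ := exists_nat_gt (C ^ 2 / ‖Ψ x₀‖ ^ 2)
  let Φ : lp (fun _ : ℤ × ℤ => ℂ) 2 := ⟨_, memℓp_rowCutoff_mul hsq hΨS x₀.2 (x₀.2 + k * q)⟩
  refine ⟨Φ, Real.le_sqrt_of_sq_le ?_, lt_of_pow_lt_pow_left₀ 2 (norm_nonneg _) ?_⟩
  · simp_rw [lp.norm_sq_eq_tsum, lp.algebraMap_sub_apply, hact]
    exact tsum_norm_sq_residual_rowCutoff_mul_le hsq hΨS heq _ _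
  · rw [lp.norm_sq_eq_tsum]
    refine lt_of_lt_of_le ?_ (le_tsum_norm_sq_rowCutoff_mul (by omega) hper x₀ k
      (memℓp_two_iff.mp Φ.2))
    rw [div_lt_iff₀ (by positivity)] at hk
    nlinarith [sq_nonneg ‖Ψ x₀‖]

/-- if there is a nonzero Bloch–Floquet generalized eigenfunction `Ψ`,
`q`-periodic in `x₂` up to a phase, square-summable in `x₁` (uniformly over a period
in `x₂`), solving `HΨ = EΨ` pointwise, then `E` belongs to the spectrum of the
periodic surface Maryland operator `H = H₀ + V`. -/
theorem bloch_generalized_eigenfunction_energy_in_spectrum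
    (g : ℝ) (hg : 0 < g) (p : ℤ) (q : ℕ) (hq : 1 ≤ q)
    (ω : ℝ) (hω : ω ∈ Set.Ico (0:ℝ) 1)
    (hreg : ∀ x₂ n : ℤ, (p : ℝ) / (q : ℝ) * (x₂ : ℝ) + ω ≠ 1/2 + (n : ℝ))
    (H : lp (fun _ : ℤ × ℤ => ℂ) 2 →L[ℂ] lp (fun _ : ℤ × ℤ => ℂ) 2)
    (hH : IsSelfAdjoint H)
    (hact : ∀ (Φ : lp (fun _ : ℤ × ℤ => ℂ) 2) (x : ℤ × ℤ),
      (H Φ : ∀ _ : ℤ × ℤ, ℂ) x = lap2 (↑Φ) x + (Vper g p q ω x : ℂ) * Φ x)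
    (E : ℝ) (Ψ : ℤ × ℤ → ℂ) (hΨ : Ψ ≠ 0)
    (θ : ℝ)
    (hbloch : ∀ x : ℤ × ℤ, Ψ (x.1, x.2 + (q : ℤ)) = Complex.exp ((θ : ℂ) * Complex.I) * Ψ x)
    (hsq : Summable fun x₁ : ℤ => ⨆ m : Fin q, ‖Ψ (x₁, ((m : ℕ) : ℤ))‖ ^ 2)
    (heq : ∀ x : ℤ × ℤ, lap2 Ψ x + (Vper g p q ω x : ℂ) * Ψ x = (E : ℂ) * Ψ x) :
    (E : ℂ) ∈ spectrum ℂ H :=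
  bloch_generalized_eigenfunction_energy_in_spectrum_general g p q hq ω H hact E Ψ hΨ θ hbloch hsq
    heq
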